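/- arXiv:2202.02239 — 3 statements merged into one kernel-verified Lean document; each statement's English description precedes it below -/
import Mathlib

section
/- For any D ≥ 0, β ∈ (0,1), and alphabet size m ≥ 2, the function π_D(T;β) = α^{|T|−1} β^{|T|−L_D(T)}, where α = (1−β)^{1/(m−1)}, defines a probability distribution on the set T(D) of proper m-ary trees of depth at most D; that is, the sum of π_D(T;β) over all T ∈ T(D) equals 1. -/
open MeasureTheory Filter Real
open scoped Topology ENNReal Classical

noncomputable section

inductive MTree (m : ℕ) : Type
  | leaf : MTree m
  | node : (Fin m → MTree m) → MTree m

namespace MTree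

variable {m : ℕ}

def depth : MTree m → ℕ
  | leaf => 0
  | node f => (Finset.univ.sup fun j => depth (f j)) + 1

def numLeaves : MTree m → ℕ
  | leaf => 1
  | node f => ∑ j, numLeaves (f j)

def leavesAtDepth : MTree m → ℕ → ℕ
  | leaf, 0 => 1
  | leaf, _ + 1 => 0
  | node _, 0 => 0
  | node f, d + 1 => ∑ j, leavesAtDepth (f j) d

def nodesAtDepth : MTree m → ℕ → ℕ
  | _, 0 => 1
  | leaf, _ + 1 => 0
  | node f, d + 1 => ∑ j, nodesAtDepth (f j) d

end MTree

/-- The BCT prior `π_D(T;β) = α^{|T|-1} β^{|T|-L_D(T)}` with `α = (1-β)^{1/(m-1)}`. -/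
def priorBCT (m D : ℕ) (β : ℝ) (T : MTree m) : ℝ :=
  ((1 - β) ^ (((m : ℝ) - 1)⁻¹)) ^ (T.numLeaves - 1) * β ^ (T.numLeaves - T.leavesAtDepth D)

/-- Probability that the Galton–Watson process with offspring distribution (β,1-β) on {0,m},
stopped at generation D, produces the tree `T`. -/
def gwStopped {m : ℕ} (β : ℝ) : ℕ → MTree m → ℝ
  | 0, .leaf => 1
  | 0, .node _ => 0
  | _ + 1, .leaf => β
  | D + 1, .node f => (1 - β) * ∏ j, gwStopped β D (f j)

namespace MTree

lemma one_le_numLeaves {m : ℕ} (hm : 1 ≤ m) : ∀ T : MTree m, 1 ≤ T.numLeaves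
  | leaf => le_refl 1
  | node f => by
      show 1 ≤ ∑ j, numLeaves (f j)
      calc (1:ℕ) ≤ m := hm
      _ = ∑ _j : Fin m, 1 := by simp
      _ ≤ ∑ j, numLeaves (f j) :=
          Finset.sum_le_sum fun j _ => one_le_numLeaves hm (f j)

lemma leavesAtDepth_le_numLeaves {m : ℕ} : ∀ (T : MTree m) (d : ℕ),
    T.leavesAtDepth d ≤ T.numLeaves
  | leaf, 0 => le_refl 1
  | leaf, _ + 1 => Nat.zero_le _
  | node _, 0 => Nat.zero_le _
  | node f, d + 1 => by
      show ∑ j, leavesAtDepth (f j) d ≤ ∑ j, numLeaves (f j)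
      exact Finset.sum_le_sum fun j _ => leavesAtDepth_le_numLeaves (f j) d

end MTree

/-- Pointwise identity between the GW probability and the BCT prior on trees of depth ≤ D. -/
lemma gw_eq_prior {m : ℕ} (hm : 2 ≤ m) {β : ℝ} (hβ : β ∈ Set.Ioo (0 : ℝ) 1) :
    ∀ (T : MTree m) (D : ℕ), T.depth ≤ D → gwStopped β D T = priorBCT m D β T
  | .leaf, 0, _ => by
      simp [gwStopped, priorBCT, MTree.numLeaves, MTree.leavesAtDepth]
  | .leaf, D + 1, _ => by
      simp [gwStopped, priorBCT, MTree.numLeaves, MTree.leavesAtDepth]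
  | .node f, 0, h => by
      exact absurd h (by simp [MTree.depth])
  | .node f, D + 1, h => by
      have h1β : (0:ℝ) < 1 - β := by linarith [hβ.2]
      have hmR : (2:ℝ) ≤ (m:ℝ) := by exact_mod_cast hm
      have hm1 : ((m:ℝ) - 1) ≠ 0 := by linarith
      set α : ℝ := (1 - β) ^ (((m : ℝ) - 1)⁻¹) with hαdef
      have hd : ∀ j, (f j).depth ≤ D := by
        intro j
        have h' : (Finset.univ.sup fun j => (f j).depth) ≤ D := Nat.succ_le_succ_iff.mp h
        exact le_trans (Finset.le_sup (f := fun j => (f j).depth) (Finset.mem_univ j)) h'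
      have IH : ∀ j, gwStopped β D (f j) = priorBCT m D β (f j) :=
        fun j => gw_eq_prior hm hβ (f j) D (hd j)
      have hαm : α ^ (m - 1) = 1 - β := by
        rw [hαdef, ← Real.rpow_natCast ((1 - β) ^ (((m : ℝ) - 1)⁻¹)) (m - 1),
          ← Real.rpow_mul (le_of_lt h1β)]
        rw [Nat.cast_sub (by omega), Nat.cast_one, inv_mul_cancel₀ hm1, Real.rpow_one]
      have hL : ∀ j, 1 ≤ (f j).numLeaves := fun j => MTree.one_le_numLeaves (by omega) (f j)
      have hsumL : ∑ j, (f j).numLeaves = (∑ j, ((f j).numLeaves - 1)) + m := by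
        calc ∑ j, (f j).numLeaves = ∑ j : Fin m, (((f j).numLeaves - 1) + 1) :=
              Finset.sum_congr rfl fun j _ => (Nat.sub_add_cancel (hL j)).symm
          _ = (∑ j, ((f j).numLeaves - 1)) + ∑ _j : Fin m, 1 := Finset.sum_add_distrib
          _ = (∑ j, ((f j).numLeaves - 1)) + m := by simp
      have e1 : (∑ j, (f j).numLeaves) - 1 = (m - 1) + ∑ j, ((f j).numLeaves - 1) := by
        rw [hsumL]; omega
      have e2 : (∑ j, (f j).numLeaves) - (∑ j, (f j).leavesAtDepth D)
          = ∑ j, ((f j).numLeaves - (f j).leavesAtDepth D) :=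
        (Finset.sum_tsub_distrib Finset.univ fun j _ => MTree.leavesAtDepth_le_numLeaves (f j) D).symm
      calc gwStopped β (D + 1) (MTree.node f)
          = (1 - β) * ∏ j, gwStopped β D (f j) := rfl
        _ = (1 - β) * ∏ j, (α ^ ((f j).numLeaves - 1)
              * β ^ ((f j).numLeaves - (f j).leavesAtDepth D)) := by
            congr 1
            refine Finset.prod_congr rfl fun j _ => ?_
            rw [IH j, hαdef]
            rfl
        _ = (1 - β) * ((α ^ ∑ j, ((f j).numLeaves - 1))
              * β ^ ∑ j, ((f j).numLeaves - (f j).leavesAtDepth D)) := by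
            rw [Finset.prod_mul_distrib, Finset.prod_pow_eq_pow_sum,
              Finset.prod_pow_eq_pow_sum]
        _ = priorBCT m (D + 1) β (MTree.node f) := by
            show _ = α ^ ((MTree.node f).numLeaves - 1)
              * β ^ ((MTree.node f).numLeaves - (MTree.node f).leavesAtDepth (D + 1))
            show _ = α ^ ((∑ j, (f j).numLeaves) - 1)
              * β ^ ((∑ j, (f j).numLeaves) - ∑ j, (f j).leavesAtDepth D)
            rw [e1, e2, pow_add, hαm]; ring

/-- The only tree of depth ≤ 0 is the leaf. -/
def subEquivZero (m : ℕ) : {T : MTree m // T.depth ≤ 0} ≃ Unit where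
  toFun _ := ()
  invFun _ := ⟨MTree.leaf, le_refl 0⟩
  left_inv := by
    rintro ⟨T, hT⟩
    cases T with
    | leaf => rfl
    | node f => simp [MTree.depth] at hT
  right_inv _ := rfl

/-- Trees of depth ≤ D+1 are either a leaf, or a node with m subtrees of depth ≤ D. -/
def subEquivSucc (m D : ℕ) :
    {T : MTree m // T.depth ≤ D + 1} ≃ (Unit ⊕ (Fin m → {T : MTree m // T.depth ≤ D})) where
  toFun T := match T with
    | ⟨.leaf, _⟩ => Sum.inl ()
    | ⟨.node f, h⟩ => Sum.inr fun j => ⟨f j, by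
        have h' : (Finset.univ.sup fun j => (f j).depth) ≤ D := Nat.succ_le_succ_iff.mp h
        exact le_trans (Finset.le_sup (f := fun j => (f j).depth) (Finset.mem_univ j)) h'⟩
  invFun x := match x with
    | Sum.inl _ => ⟨.leaf, Nat.zero_le _⟩
    | Sum.inr g => ⟨.node fun j => (g j).1, by
        show (Finset.univ.sup fun j => ((g j).1).depth) + 1 ≤ D + 1
        exact Nat.succ_le_succ (Finset.sup_le fun j _ => (g j).2)⟩
  left_inv := by rintro ⟨T, hT⟩; cases T <;> rfl
  right_inv := by rintro (u | g) <;> rfl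

instance fintypeSub (m : ℕ) : ∀ D, Fintype {T : MTree m // T.depth ≤ D}
  | 0 => Fintype.ofEquiv Unit (subEquivZero m).symm
  | D + 1 =>
    letI := fintypeSub m D
    Fintype.ofEquiv _ (subEquivSucc m D).symm

lemma gw_sum (m : ℕ) (β : ℝ) :
    ∀ D, ∑ T : {T : MTree m // T.depth ≤ D}, gwStopped β D T.1 = 1
  | 0 => by
    rw [← Equiv.sum_comp (subEquivZero m).symm fun T => gwStopped β 0 T.1]
    simp [gwStopped, subEquivZero]
  | D + 1 => by
    rw [← Equiv.sum_comp (subEquivSucc m D).symm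
      (fun T : {T : MTree m // T.depth ≤ D + 1} => gwStopped β (D + 1) T.1)]
    rw [Fintype.sum_sum_type]
    have hinl : ∀ u : Unit,
        gwStopped β (D + 1) (((subEquivSucc m D).symm (Sum.inl u)).1) = β := fun _ => rfl
    have hinr : ∀ g : Fin m → {T : MTree m // T.depth ≤ D},
        gwStopped β (D + 1) (((subEquivSucc m D).symm (Sum.inr g)).1)
          = (1 - β) * ∏ j, gwStopped β D (g j).1 := fun _ => rfl
    simp only [hinl, hinr]
    rw [← Finset.mul_sum]
    have hpi : ∑ g : Fin m → {T : MTree m // T.depth ≤ D}, ∏ j, gwStopped β D (g j).1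
        = ∏ _j : Fin m, ∑ t : {T : MTree m // T.depth ≤ D}, gwStopped β D t.1 := by
      rw [Finset.prod_univ_sum (fun _ => Finset.univ)
        (fun (_ : Fin m) (t : {T : MTree m // T.depth ≤ D}) => gwStopped β D t.1)]
      rw [Fintype.piFinset_univ]
    rw [hpi]
    have := gw_sum m β D
    rw [this]
    simp

/-- π_D(·;β) is a probability distribution on the set of proper m-ary trees
of depth at most D: it sums to 1. -/
theorem priorBCT_tsum_eq_one {m : ℕ} (hm : 2 ≤ m) (D : ℕ) (β : ℝ)
    (hβ : β ∈ Set.Ioo (0 : ℝ) 1) :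
    ∑' T : {T : MTree m // T.depth ≤ D}, priorBCT m D β T.1 = 1 := by
  rw [tsum_fintype, ← gw_sum m β D]
  exact Finset.sum_congr rfl fun T _ => (gw_eq_prior hm hβ T.1 D T.2).symm

end
end

section
/- For every count vector a_s = (a_s(0), …, a_s(m−1)) of nonnegative integers with M_s = Σ_j a_s(j) ≥ 1, the Krichevsky–Trofimov estimated probability P_e(a_s) = [Π_{j=0}^{m−1} (1/2)(3/2)···(a_s(j) − 1/2)] / [(m/2)(m/2+1)···(m/2 + M_s − 1)] satisfies log P_e(a_s) ≥ Σ_j a_s(j) log(a_s(j)/M_s) − ((m−1)/2) log M_s − log m. -/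
open Real

noncomputable section

/-- The Krichevsky–Trofimov estimated probability
`P_e(a) = [∏_j (1/2)(3/2)···(a(j)-1/2)] / [(m/2)(m/2+1)···(m/2+M-1)]`
of a count vector `a`, where `M = ∑_j a(j)`. -/
def ktProb (m : ℕ) (a : Fin m → ℕ) : ℝ :=
  (∏ j, ∏ i ∈ Finset.range (a j), ((i : ℝ) + 1 / 2)) /
    ∏ i ∈ Finset.range (∑ j, a j), ((m : ℝ) / 2 + i)

/-!
`log P_e(a) = ∑_j ∑_{i<a_j} log (i + 1/2) - ∑_{i<M} log (m/2 + i)`, and both sums are compared with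
`n log n` term by term. By the midpoint rule for the concave `log`,
`(x+1) log (x+1) - x log x - 1 = ∫_x^{x+1} log t dt ≤ log (x + 1/2)`, so
`∑_{i<n} log (i + 1/2) - n log n + n` is nondecreasing: it is `≥ 0`, and `≥ 1 - log 2` once `n ≥ 1`.
The midpoint rule for the convex `1/t` gives `(x + 1/2) (log (x+1) - log x) ≥ 1`, which makes each
term `log (m/2 + M)` at most the increment of `M log M + ((m-1)/2) log M - M`; starting from
`M = 1` this bounds the denominator. The constants add up to `-log 2 - log (m/2) = -log m`.
-/

open Finset

theorem integral_le_of_le_affine_midpoint {f : ℝ → ℝ} {a b d : ℝ} (hab : a ≤ b)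
    (hf : IntervalIntegrable f MeasureTheory.volume a b)
    (h : ∀ t ∈ Set.Ioo a b, f t ≤ f ((a + b) / 2) + d * (t - (a + b) / 2)) :
    ∫ t in a..b, f t ≤ (b - a) * f ((a + b) / 2) := by
  have hline : Continuous fun t => f ((a + b) / 2) + d * (t - (a + b) / 2) := by fun_prop
  calc ∫ t in a..b, f t ≤ ∫ t in a..b, (f ((a + b) / 2) + d * (t - (a + b) / 2)) :=
        intervalIntegral.integral_mono_on_of_le_Ioo hab hf (hline.intervalIntegrable _ _) h
    _ = (b - a) * f ((a + b) / 2) := by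
        rw [intervalIntegral.integral_add intervalIntegrable_const
          ((by fun_prop : Continuous fun t => d * (t - (a + b) / 2)).intervalIntegrable _ _)]
        simp only [intervalIntegral.integral_const, intervalIntegral.integral_const_mul,
          intervalIntegral.integral_sub intervalIntegral.intervalIntegrable_id
            intervalIntegrable_const, integral_id, smul_eq_mul]
        ring

theorem succ_mul_log_succ_sub_mul_log_le {x : ℝ} (hx : 0 ≤ x) :
    (x + 1) * log (x + 1) - x * log x ≤ log (x + 1 / 2) + 1 := by
  have hc : 0 < x + 1 / 2 := by linarith
  have hmid : (x + (x + 1)) / 2 = x + 1 / 2 := by ring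
  have htangent : ∀ t ∈ Set.Ioo x (x + 1),
      log t ≤ log ((x + (x + 1)) / 2) + (x + 1 / 2)⁻¹ * (t - (x + (x + 1)) / 2) := by
    intro t ht
    have ht0 : 0 < t := hx.trans_lt ht.1
    have hle := log_le_sub_one_of_pos (div_pos ht0 hc)
    rw [log_div ht0.ne' hc.ne'] at hle
    have hdiv : t / (x + 1 / 2) = 1 + (x + 1 / 2)⁻¹ * (t - (x + 1 / 2)) := by field_simp; ring
    rw [hmid]
    linarith
  have hint := integral_le_of_le_affine_midpoint (by linarith)
    intervalIntegral.intervalIntegrable_log' htangent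
  rw [integral_log, hmid] at hint
  linarith

theorem one_le_add_half_mul_log_succ_sub_log {x : ℝ} (hx : 0 < x) :
    1 ≤ (x + 1 / 2) * (log (x + 1) - log x) := by
  have hc : 0 < x + 1 / 2 := by linarith
  have hmid : (x + (x + 1)) / 2 = x + 1 / 2 := by ring
  have h0 : (0 : ℝ) ∉ Set.uIcc x (x + 1) := Set.notMem_uIcc_of_lt hx (by linarith)
  have htangent : ∀ t ∈ Set.Ioo x (x + 1),
      -t⁻¹ ≤ -((x + (x + 1)) / 2)⁻¹ + (x + 1 / 2)⁻¹ ^ 2 * (t - (x + (x + 1)) / 2) := by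
    intro t ht
    have ht0 : 0 < t := hx.trans ht.1
    rw [hmid]
    field_simp
    nlinarith [sq_nonneg (t - (x + 1 / 2))]
  have hint := integral_le_of_le_affine_midpoint (f := fun t => -t⁻¹) (by linarith)
    (intervalIntegrable_inv_iff.2 (.inr h0)).neg htangent
  rw [intervalIntegral.integral_neg, integral_inv h0, log_div (by linarith) hx.ne', hmid] at hint
  rw [← div_le_iff₀' hc, one_div]
  linarith

theorem log_add_half_add_one_le {m x : ℝ} (hm : 2 ≤ m) (hx : 0 < x) :
    log (x + m / 2) + 1 ≤
      (x + 1) * log (x + 1) - x * log x + (m - 1) / 2 * (log (x + 1) - log x) := by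
  have hgap := one_le_add_half_mul_log_succ_sub_log hx
  have hinv : 1 / (x + 1) ≤ log (x + 1) - log x := by
    rw [div_le_iff₀ (by linarith)]
    nlinarith
  have hratio : log (x + m / 2) - log (x + 1) ≤ (m - 2) / 2 * (1 / (x + 1)) := by
    have hle := log_le_sub_one_of_pos (show 0 < (x + m / 2) / (x + 1) by positivity)
    rw [log_div (by positivity) (by positivity)] at hle
    convert hle using 1
    field_simp
    ring
  nlinarith [mul_le_mul_of_nonneg_left hinv (show 0 ≤ (m - 2) / 2 by linarith)]

theorem monotone_sum_log_add_half_sub_mul_log :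
    Monotone fun n : ℕ => ∑ i ∈ range n, log ((i : ℝ) + 1 / 2) - n * log n + n := by
  refine monotone_nat_of_le_succ fun n => ?_
  have hstep := succ_mul_log_succ_sub_mul_log_le (Nat.cast_nonneg (α := ℝ) n)
  push_cast [sum_range_succ]
  linarith

theorem sum_mul_log_sub_sum_add_le_sum_sum_log_add_half {ι : Type*} [Fintype ι] (a : ι → ℕ)
    {k : ι} (hk : a k ≠ 0) :
    ∑ j, (a j : ℝ) * log (a j) - ∑ j, (a j : ℝ) + (1 - log 2) ≤
      ∑ j, ∑ i ∈ range (a j), log ((i : ℝ) + 1 / 2) := by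
  set u := fun n : ℕ => ∑ i ∈ range n, log ((i : ℝ) + 1 / 2) - n * log n + n
  have hu_nonneg : ∀ n, 0 ≤ u n := fun n => by
    simpa [u] using monotone_sum_log_add_half_sub_mul_log (Nat.zero_le n)
  have hu_k : 1 - log 2 ≤ u (a k) :=
    calc 1 - log 2 = u 1 := by simp [u, log_inv]; ring
      _ ≤ u (a k) := monotone_sum_log_add_half_sub_mul_log (Nat.one_le_iff_ne_zero.2 hk)
  have hsum := hu_k.trans (single_le_sum (fun j _ => hu_nonneg (a j)) (mem_univ k))
  simp only [u, sum_add_distrib, sum_sub_distrib] at hsum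
  linarith

theorem sum_range_log_add_le {m : ℝ} (hm : 2 ≤ m) {N : ℕ} (hN : 1 ≤ N) :
    ∑ i ∈ range N, log (m / 2 + i) ≤
      N * log N + (m - 1) / 2 * log N - N + 1 + log (m / 2) := by
  induction N, hN using Nat.le_induction with
  | base => simp
  | succ N hN ih =>
    have hstep := log_add_half_add_one_le hm (show (0 : ℝ) < N by positivity)
    push_cast [sum_range_succ]
    rw [add_comm (m / 2)]
    linarith

theorem sum_mul_log_div {ι : Type*} (s : Finset ι) (p : ι → ℝ) {c : ℝ} (hc : c ≠ 0) :
    ∑ j ∈ s, p j * log (p j / c) = ∑ j ∈ s, p j * log (p j) - (∑ j ∈ s, p j) * log c := by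
  rw [sum_mul, ← sum_sub_distrib]
  refine sum_congr rfl fun j _ => ?_
  rcases eq_or_ne (p j) 0 with hp | hp
  · simp [hp]
  · rw [log_div hp hc, mul_sub]

theorem log_ktProb {m : ℕ} (hm : 0 < m) (a : Fin m → ℕ) :
    log (ktProb m a) = ∑ j, ∑ i ∈ range (a j), log ((i : ℝ) + 1 / 2) -
      ∑ i ∈ range (∑ j, a j), log ((m : ℝ) / 2 + i) := by
  have hnum : ∀ j, ∀ i ∈ range (a j), (i : ℝ) + 1 / 2 ≠ 0 := fun j i _ => by positivity
  have hden : ∀ i ∈ range (∑ j, a j), (m : ℝ) / 2 + i ≠ 0 := fun i _ => by positivity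
  rw [ktProb, log_div (prod_ne_zero_iff.2 fun j _ => prod_ne_zero_iff.2 (hnum j))
    (prod_ne_zero_iff.2 hden), log_prod hden, log_prod fun j _ => prod_ne_zero_iff.2 (hnum j)]
  simp_rw [log_prod (hnum _)]

/-- lower bound on the log of the KT estimated probability:
`log P_e(a) ≥ ∑_j a(j) log(a(j)/M) − ((m−1)/2) log M − log m`. -/
theorem ktProb_log_lower_bound (m : ℕ) (hm : 2 ≤ m) (a : Fin m → ℕ)
    (hM : 1 ≤ ∑ j, a j) :
    Real.log (ktProb m a) ≥
      (∑ j, (a j : ℝ) * Real.log ((a j : ℝ) / (∑ j, a j : ℕ))) -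
        ((m : ℝ) - 1) / 2 * Real.log (∑ j, a j : ℕ) - Real.log m := by
  obtain ⟨k, -, hk⟩ := exists_ne_zero_of_sum_ne_zero (by omega : ∑ j, a j ≠ 0)
  have hnum := sum_mul_log_sub_sum_add_le_sum_sum_log_add_half a hk
  have hden := sum_range_log_add_le (m := m) (by exact_mod_cast hm) hM
  have hlog_half : log ((m : ℝ) / 2) = log m - log 2 := log_div (by positivity) two_ne_zero
  rw [log_ktProb (by omega), sum_mul_log_div _ _ (by positivity)]
  push_cast at hden ⊢
  linarith

end
end

section
/- Under the posterior branching process representation, the posterior probability of any tree T ∈ T(D) can be written as π(T|x) = Π_{s ∈ T_o} (1 − P_{b,s}) · Π_{s ∈ T} P_{b,s}, where T_o is the set of internal nodes of T, and with the convention P_{b,s} = 1 for leaves s at depth D. -/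
open MeasureTheory Filter Real
open scoped Topology ENNReal Classical

noncomputable section

/-- The weighted probabilities `P_{w,s}`: with remaining depth budget 0 (i.e. at maximal
depth D), `P_{w,s} = P_{e,s}`; otherwise `P_{w,s} = β P_{e,s} + (1-β) ∏_j P_{w,sj}`. -/
def pw {m : ℕ} (β : ℝ) (Pe : List (Fin m) → ℝ) : ℕ → List (Fin m) → ℝ
  | 0, s => Pe s
  | D + 1, s => β * Pe s + (1 - β) * ∏ j, pw β Pe D (s ++ [j])

/-- The branching probabilities `P_{b,s} = β P_{e,s} / P_{w,s}` for contexts of length < D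
(positive remaining budget), with the convention `P_{b,s} = 1` at maximal depth. -/
def pb {m : ℕ} (β : ℝ) (Pe : List (Fin m) → ℝ) : ℕ → List (Fin m) → ℝ
  | 0, _ => 1
  | D + 1, s => β * Pe s / pw β Pe (D + 1) s

/-- `∏_{s ∈ T} P_{e,s}`: product of the estimated probabilities over the leaf contexts of
the tree `T` rooted at context `s`; this is the marginal likelihood `P(x|T)`. -/
def leafProd {m : ℕ} (Pe : List (Fin m) → ℝ) : List (Fin m) → MTree m → ℝ
  | s, .leaf => Pe s
  | s, .node f => ∏ j, leafProd Pe (s ++ [j]) (f j)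

/-- The right-hand-side product `prod_{s in T_o} (1 - P_{b,s}) * prod_{s in T} P_{b,s}`
over internal nodes and leaves of T, with the convention P_{b,s} = 1 for leaves at
maximal depth (remaining budget 0). -/
def branchProdForm {m : ℕ} (β : ℝ) (Pe : List (Fin m) → ℝ) :
    ℕ → List (Fin m) → MTree m → ℝ
  | D, s, .leaf => pb β Pe D s
  | 0, _, .node _ => 0
  | D + 1, s, .node f => (1 - pb β Pe (D + 1) s) * ∏ j, branchProdForm β Pe D (s ++ [j]) (f j)


/-- Number of internal nodes. -/
def internalCount {m : ℕ} : MTree m → ℕ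
  | .leaf => 0
  | .node f => 1 + ∑ j, internalCount (f j)

lemma leavesAtDepth_le_numLeaves {m : ℕ} (T : MTree m) (D : ℕ) :
    T.leavesAtDepth D ≤ T.numLeaves := by
  induction T generalizing D with
  | leaf => cases D <;> simp [MTree.leavesAtDepth, MTree.numLeaves]
  | node f ih =>
    cases D with
    | zero => simp [MTree.leavesAtDepth]
    | succ d => exact Finset.sum_le_sum fun j _ => ih j d

lemma numLeaves_eq_internal {m : ℕ} (hm : 1 ≤ m) (T : MTree m) :
    T.numLeaves = (m - 1) * internalCount T + 1 := by
  induction T with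
  | leaf => simp [MTree.numLeaves, internalCount]
  | node f ih =>
    simp only [MTree.numLeaves, internalCount]
    rw [Finset.sum_congr rfl fun j _ => ih j]
    rw [Finset.sum_add_distrib, ← Finset.mul_sum, Finset.sum_const, Finset.card_univ,
      Fintype.card_fin, smul_eq_mul, mul_one]
    obtain ⟨k, rfl⟩ : ∃ k, m = k + 1 := ⟨m - 1, by omega⟩
    simp [Nat.add_sub_cancel]
    ring

lemma depth_node_le {m : ℕ} {f : Fin m → MTree m} {D : ℕ}
    (h : (MTree.node f).depth ≤ D + 1) (j : Fin m) : (f j).depth ≤ D := by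
  have h2 : (f j).depth ≤ Finset.univ.sup fun j => (f j).depth :=
    Finset.le_sup (f := fun j => (f j).depth) (Finset.mem_univ j)
  simp only [MTree.depth] at h
  omega

lemma gwStopped_eq {m : ℕ} (β : ℝ) (D : ℕ) (T : MTree m) (hT : T.depth ≤ D) :
    gwStopped β D T =
      β ^ (T.numLeaves - T.leavesAtDepth D) * (1 - β) ^ internalCount T := by
  induction T generalizing D with
  | leaf =>
    cases D <;> simp [gwStopped, MTree.numLeaves, MTree.leavesAtDepth, internalCount]
  | node f ih =>
    cases D with
    | zero => simp [MTree.depth] at hT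
    | succ d =>
      have hj : ∀ j, (f j).depth ≤ d := depth_node_le hT
      simp only [gwStopped, MTree.numLeaves, MTree.leavesAtDepth, internalCount]
      rw [Finset.prod_congr rfl fun j _ => ih j d (hj j)]
      rw [Finset.prod_mul_distrib, Finset.prod_pow_eq_pow_sum, Finset.prod_pow_eq_pow_sum]
      rw [Finset.sum_tsub_distrib Finset.univ (fun j _ => leavesAtDepth_le_numLeaves (f j) d)]
      rw [pow_add, pow_one]
      ring

lemma priorBCT_eq_gwStopped {m : ℕ} (hm : 2 ≤ m) (D : ℕ) {β : ℝ}
    (hβ : β ∈ Set.Ioo (0 : ℝ) 1) (T : MTree m) (hT : T.depth ≤ D) :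
    priorBCT m D β T = gwStopped β D T := by
  have h1 : (0 : ℝ) ≤ 1 - β := by linarith [hβ.2]
  rw [gwStopped_eq β D T hT, priorBCT, mul_comm]
  congr 1
  have hL : T.numLeaves - 1 = (m - 1) * internalCount T := by
    rw [numLeaves_eq_internal (by omega) T]; omega
  rw [hL, ← Real.rpow_natCast ((1 - β) ^ (((m : ℝ) - 1)⁻¹)) _,
    ← Real.rpow_natCast (1 - β) (internalCount T), ← Real.rpow_mul h1]
  congr 1
  have hm1 : ((m : ℝ) - 1) ≠ 0 := by
    have : (2 : ℝ) ≤ (m : ℝ) := by exact_mod_cast hm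
    linarith
  push_cast [Nat.cast_sub (by omega : 1 ≤ m)]
  field_simp

lemma pw_pos {m : ℕ} {β : ℝ} (hβ : β ∈ Set.Ioo (0 : ℝ) 1)
    {Pe : List (Fin m) → ℝ} (hPe : ∀ s, 0 < Pe s) (D : ℕ) (s : List (Fin m)) :
    0 < pw β Pe D s := by
  induction D generalizing s with
  | zero => simpa [pw] using hPe s
  | succ d ih =>
    have h1 : 0 < 1 - β := by linarith [hβ.2]
    have : 0 < ∏ j, pw β Pe d (s ++ [j]) := Finset.prod_pos fun j _ => ih _
    have := hβ.1
    have := hPe s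
    simp only [pw]
    positivity

lemma gw_mul_leafProd {m : ℕ} {β : ℝ} (hβ : β ∈ Set.Ioo (0 : ℝ) 1)
    {Pe : List (Fin m) → ℝ} (hPe : ∀ s, 0 < Pe s) (D : ℕ) (s : List (Fin m))
    (T : MTree m) (hT : T.depth ≤ D) :
    gwStopped β D T * leafProd Pe s T = branchProdForm β Pe D s T * pw β Pe D s := by
  induction T generalizing D s with
  | leaf =>
    cases D with
    | zero => simp [gwStopped, leafProd, branchProdForm, pb, pw]
    | succ d =>
      have hne : pw β Pe (d + 1) s ≠ 0 := (pw_pos hβ hPe _ _).ne'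
      simp only [gwStopped, leafProd, branchProdForm, pb]
      field_simp
  | node f ih =>
    cases D with
    | zero => simp [MTree.depth] at hT
    | succ d =>
      have hj : ∀ j, (f j).depth ≤ d := depth_node_le hT
      simp only [gwStopped, leafProd, branchProdForm]
      have key : (1 - pb β Pe (d + 1) s) * pw β Pe (d + 1) s
          = (1 - β) * ∏ j, pw β Pe d (s ++ [j]) := by
        have hne : pw β Pe (d + 1) s ≠ 0 := (pw_pos hβ hPe _ _).ne'
        rw [pb, sub_mul, div_mul_cancel₀ _ hne, pw]
        ring
      calc (1 - β) * (∏ j, gwStopped β d (f j)) * ∏ j, leafProd Pe (s ++ [j]) (f j)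
          = (1 - β) * ∏ j, (gwStopped β d (f j) * leafProd Pe (s ++ [j]) (f j)) := by
            rw [Finset.prod_mul_distrib]; ring
        _ = (1 - β) * ∏ j, (branchProdForm β Pe d (s ++ [j]) (f j) * pw β Pe d (s ++ [j])) := by
            rw [Finset.prod_congr rfl fun j _ => ih j d (s ++ [j]) (hj j)]
        _ = ((1 - β) * ∏ j, pw β Pe d (s ++ [j])) * ∏ j, branchProdForm β Pe d (s ++ [j]) (f j) := by
            rw [Finset.prod_mul_distrib]; ring
        _ = (1 - pb β Pe (d + 1) s) * (∏ j, branchProdForm β Pe d (s ++ [j]) (f j)) * pw β Pe (d + 1) s := by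
            rw [← key]; ring

/-- the posterior probability of any tree T in T(D),
pi(T|x) = prior(T;beta) * prod_{s in T} P_{e,s} / P_{w,root}, can be written as
prod over internal nodes s of (1 - P_{b,s}) times prod over leaves s of P_{b,s},
with the convention P_{b,s} = 1 for leaves at depth D. -/
theorem posterior_eq_branchProdForm {m : ℕ} (hm : 2 ≤ m) (D : ℕ) (β : ℝ)
    (hβ : β ∈ Set.Ioo (0 : ℝ) 1) (Pe : List (Fin m) → ℝ) (hPe : ∀ s, 0 < Pe s)
    (T : MTree m) (hT : T.depth ≤ D) :
    priorBCT m D β T * leafProd Pe [] T / pw β Pe D [] =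
      branchProdForm β Pe D [] T := by
  rw [priorBCT_eq_gwStopped hm D hβ T hT, gw_mul_leafProd hβ hPe D [] T hT,
    mul_div_cancel_right₀ _ (pw_pos hβ hPe D []).ne']

end
end
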